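/- arXiv:1207.3972 — 10 statements merged into one kernel-verified Lean document; each statement's English description precedes it below -/
import Mathlib

section
/- Let F be an algebraically closed field and let A₁, ..., Aₙ be n × n matrices over F with n ≥ 2. Then there exist x₁, ..., xₙ ∈ F, not all zero, such that the matrix x₁A₁ + x₂A₂ + ... + xₙAₙ is singular (has determinant zero). -/
/-- If `F` is algebraically closed, `n ≥ 2`, and `A₁, …, Aₙ` are `n × n` matrices
over `F`, then some nontrivial linear combination `x₁A₁ + ⋯ + xₙAₙ` is singular. -/
theorem stmt0 (F : Type*) [Field F] [IsAlgClosed F] (n : ℕ) (hn : 2 ≤ n)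
    (A : Fin n → Matrix (Fin n) (Fin n) F) :
    ∃ x : Fin n → F, x ≠ 0 ∧ (∑ i, x i • A i).det = 0 := by
  have hn0 : 0 < n := by omega
  have hn1 : 1 < n := by omega
  set i0 : Fin n := ⟨0, hn0⟩
  set i1 : Fin n := ⟨1, hn1⟩
  have hne : i0 ≠ i1 := by simp [i0, i1, Fin.ext_iff]
  set p : Polynomial F :=
    ((Polynomial.X : Polynomial F) • (A i0).map Polynomial.C + (A i1).map Polynomial.C).det with hp
  by_cases hdeg : p.natDegree = 0
  · -- p constant, so det (A i0) = coeff n p = 0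
    refine ⟨Pi.single i0 1, ?_, ?_⟩
    · intro h
      have := congrFun h i0
      simp at this
    · have hc : p.coeff (Fintype.card (Fin n)) = (A i0).det :=
        Polynomial.coeff_det_X_add_C_card _ _
      have hcz : p.coeff (Fintype.card (Fin n)) = 0 := by
        apply Polynomial.coeff_eq_zero_of_natDegree_lt
        simpa [hdeg] using hn0
      have hdet0 : (A i0).det = 0 := by rw [← hc, hcz]
      have : (∑ i, (Pi.single i0 (1:F) : Fin n → F) i • A i) = A i0 := by
        rw [Fintype.sum_eq_single i0]
        · simp
        · intro j hj; simp [Pi.single_eq_of_ne hj]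
      rw [this, hdet0]
  · -- p has positive degree, take a root t
    have hpd : 0 < p.degree := by
      have : p ≠ 0 := fun h => hdeg (by simp [h])
      rw [Polynomial.degree_eq_natDegree this]
      exact_mod_cast Nat.pos_of_ne_zero hdeg
    obtain ⟨t, ht⟩ := IsAlgClosed.exists_root p (by intro h; rw [h] at hpd; simp at hpd)
    refine ⟨fun i => if i = i0 then t else if i = i1 then 1 else 0, ?_, ?_⟩
    · intro h
      have := congrFun h i1
      simp [hne.symm] at this
    · have hsum : (∑ i, (if i = i0 then t else if i = i1 then (1:F) else 0) • A i)
          = t • A i0 + A i1 := by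
        rw [Finset.sum_eq_add_of_mem i0 i1 (Finset.mem_univ _) (Finset.mem_univ _) hne]
        · simp [hne, hne.symm]
        · intro j _ hj
          simp [hj.1, hj.2]
      rw [hsum]
      have := ht
      rw [Polynomial.IsRoot, hp, ← Polynomial.coe_evalRingHom, RingHom.map_det] at this
      convert this using 2
      ext a b
      simp only [Matrix.add_apply, Matrix.smul_apply, Matrix.map_apply, smul_eq_mul,
        RingHom.mapMatrix_apply, Polynomial.coe_evalRingHom, Polynomial.eval_add,
        Polynomial.eval_mul, Polynomial.eval_X, Polynomial.eval_C]
end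

section
/- Let F be an algebraically closed field and V = F² ⊗ F² ⊗ F². Then every tensor v ∈ V is singular: there exists an index i ∈ {1,2,3} and a nonzero linear functional w on the i-th factor F² such that the contraction of v by w is a singular element of the tensor product of the remaining two factors (i.e., the corresponding 2×2 matrix has determinant zero). -/
open TensorProduct

variable (F : Type*) [Field F]

/-- Identification of `F² ⊗ F²` with `2 × 2` matrices. -/
noncomputable def toMat :
    ((Fin 2 → F) ⊗[F] (Fin 2 → F)) →ₗ[F] Matrix (Fin 2) (Fin 2) F :=
  TensorProduct.lift
    { toFun := fun x =>
        { toFun := fun y => Matrix.of fun i j => x i * y j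
          map_add' := by intro y z; ext i j; simp only [LinearMap.coe_mk, AddHom.coe_mk, LinearMap.add_apply, LinearMap.smul_apply, Matrix.add_apply, Matrix.smul_apply, Matrix.of_apply, Pi.add_apply, Pi.smul_apply, smul_eq_mul, RingHom.id_apply]; ring
          map_smul' := by intro c y; ext i j; simp only [LinearMap.coe_mk, AddHom.coe_mk, LinearMap.add_apply, LinearMap.smul_apply, Matrix.add_apply, Matrix.smul_apply, Matrix.of_apply, Pi.add_apply, Pi.smul_apply, smul_eq_mul, RingHom.id_apply]; ring }
      map_add' := by
        intro x x'; refine LinearMap.ext fun y => ?_; ext i j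
        simp only [LinearMap.coe_mk, AddHom.coe_mk, LinearMap.add_apply, LinearMap.smul_apply, Matrix.add_apply, Matrix.smul_apply, Matrix.of_apply, Pi.add_apply, Pi.smul_apply, smul_eq_mul, RingHom.id_apply]; ring
      map_smul' := by
        intro c x; refine LinearMap.ext fun y => ?_; ext i j
        simp only [LinearMap.coe_mk, AddHom.coe_mk, LinearMap.add_apply, LinearMap.smul_apply, Matrix.add_apply, Matrix.smul_apply, Matrix.of_apply, Pi.add_apply, Pi.smul_apply, smul_eq_mul, RingHom.id_apply]; ring }

/-- Contraction of `v ∈ F² ⊗ F² ⊗ F²` by a functional on the first factor. -/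
noncomputable def con1 (w : (Fin 2 → F) →ₗ[F] F) :
    ((Fin 2 → F) ⊗[F] ((Fin 2 → F) ⊗[F] (Fin 2 → F))) →ₗ[F]
      ((Fin 2 → F) ⊗[F] (Fin 2 → F)) :=
  (TensorProduct.lid F _).toLinearMap ∘ₗ TensorProduct.map w LinearMap.id

/-- Contraction of `v ∈ F² ⊗ F² ⊗ F²` by a functional on the second factor. -/
noncomputable def con2 (w : (Fin 2 → F) →ₗ[F] F) :
    ((Fin 2 → F) ⊗[F] ((Fin 2 → F) ⊗[F] (Fin 2 → F))) →ₗ[F]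
      ((Fin 2 → F) ⊗[F] (Fin 2 → F)) :=
  TensorProduct.map LinearMap.id
    ((TensorProduct.lid F _).toLinearMap ∘ₗ TensorProduct.map w LinearMap.id)

/-- Contraction of `v ∈ F² ⊗ F² ⊗ F²` by a functional on the third factor. -/
noncomputable def con3 (w : (Fin 2 → F) →ₗ[F] F) :
    ((Fin 2 → F) ⊗[F] ((Fin 2 → F) ⊗[F] (Fin 2 → F))) →ₗ[F]
      ((Fin 2 → F) ⊗[F] (Fin 2 → F)) :=
  TensorProduct.map LinearMap.id
    ((TensorProduct.rid F _).toLinearMap ∘ₗ TensorProduct.map LinearMap.id w)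

/-- A tensor in `F² ⊗ F² ⊗ F²` is singular if some contraction by a nonzero
functional on one of the three factors is a singular `2 × 2` tensor. -/
def TensorSingular (v : (Fin 2 → F) ⊗[F] ((Fin 2 → F) ⊗[F] (Fin 2 → F))) : Prop :=
  ∃ w : (Fin 2 → F) →ₗ[F] F, w ≠ 0 ∧
    ((toMat F (con1 F w v)).det = 0 ∨ (toMat F (con2 F w v)).det = 0 ∨
      (toMat F (con3 F w v)).det = 0)

/-- A tensor is nonsingular if all contractions by nonzero functionals are
invertible `2 × 2` tensors. -/
def TensorNonsingular (v : (Fin 2 → F) ⊗[F] ((Fin 2 → F) ⊗[F] (Fin 2 → F))) : Prop :=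
  ∀ w : (Fin 2 → F) →ₗ[F] F, w ≠ 0 →
    IsUnit (toMat F (con1 F w v)) ∧ IsUnit (toMat F (con2 F w v)) ∧
      IsUnit (toMat F (con3 F w v))

/-- The tensor rank: least number of pure tensors needed. -/
noncomputable def tensorRank (v : (Fin 2 → F) ⊗[F] ((Fin 2 → F) ⊗[F] (Fin 2 → F))) : ℕ :=
  sInf {k | ∃ f g h : Fin k → (Fin 2 → F),
    v = ∑ i, f i ⊗ₜ[F] (g i ⊗ₜ[F] h i)}

/-- Over an algebraically closed field, every tensor in `F² ⊗ F² ⊗ F²` is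
singular. -/
theorem stmt2 (F : Type*) [Field F] [IsAlgClosed F]
    (v : (Fin 2 → F) ⊗[F] ((Fin 2 → F) ⊗[F] (Fin 2 → F))) :
    TensorSingular F v := by
  classical
  set p0 : (Fin 2 → F) →ₗ[F] F := LinearMap.proj 0 with hp0
  set p1 : (Fin 2 → F) →ₗ[F] F := LinearMap.proj 1 with hp1
  have con1_lin : ∀ (a b : F) (u : (Fin 2 → F) ⊗[F] ((Fin 2 → F) ⊗[F] (Fin 2 → F))),
      con1 F (a • p0 + b • p1) u = a • con1 F p0 u + b • con1 F p1 u := by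
    intro a b u
    induction u using TensorProduct.induction_on with
    | zero => simp only [LinearMap.map_zero, smul_zero, add_zero]
    | tmul x y =>
        simp only [con1, LinearMap.coe_comp, LinearEquiv.coe_coe, Function.comp_apply,
          TensorProduct.map_tmul, LinearMap.id_coe, id_eq, TensorProduct.lid_tmul,
          LinearMap.add_apply, LinearMap.smul_apply, smul_eq_mul]
        module
    | add u1 u2 h1 h2 => simp only [LinearMap.map_add, h1, h2]; module
  set A := toMat F (con1 F p0 v) with hA'
  set B := toMat F (con1 F p1 v) with hB'
  have key : ∀ a b : F, toMat F (con1 F (a • p0 + b • p1) v) = a • A + b • B := by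
    intro a b
    rw [con1_lin a b v, map_add, map_smul, map_smul]
  by_cases hA : A.det = 0
  · refine ⟨p0, ?_, Or.inl hA⟩
    intro h
    have : p0 (Pi.single 0 1) = 0 := by rw [h]; rfl
    simp [hp0] at this
  · set β : F := A 0 0 * B 1 1 + B 0 0 * A 1 1 - A 0 1 * B 1 0 - B 0 1 * A 1 0 with hβ
    set p : Polynomial F := Polynomial.C A.det * Polynomial.X ^ 2 +
      Polynomial.C β * Polynomial.X + Polynomial.C B.det with hp
    have hdeg : p.degree = 2 := Polynomial.degree_quadratic hA
    obtain ⟨t, ht⟩ := IsAlgClosed.exists_root p (by rw [hdeg]; exact two_ne_zero)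
    rw [Polynomial.IsRoot] at ht
    refine ⟨t • p0 + (1 : F) • p1, ?_, Or.inl ?_⟩
    · intro h
      have : (t • p0 + (1 : F) • p1) (Pi.single 1 1) = 0 := by rw [h]; rfl
      simp [hp0, hp1] at this
    · rw [key t 1, one_smul]
      have : (t • A + B).det = p.eval t := by
        simp only [Matrix.det_fin_two, Matrix.add_apply, Matrix.smul_apply, smul_eq_mul,
          hp, hβ, Polynomial.eval_add, Polynomial.eval_mul, Polynomial.eval_pow,
          Polynomial.eval_C, Polynomial.eval_X]
        ring
      rw [this, ht]
end

section
/- Over the finite field F_q, a tensor v ∈ F_q² ⊗ F_q² ⊗ F_q² is nonsingular if and only if the bilinear multiplication ∘ on F_q² defined by the slices of v (x ∘ y = the vector whose coordinates are the bilinear forms given by the slices) has no zero divisors: x ∘ y = 0 implies x = 0 or y = 0. -/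
/-- The slices of a `2×2×2` hypercube along the first index. -/
def slice1 {F : Type*} (v : Fin 2 → Fin 2 → Fin 2 → F) (i : Fin 2) :
    Matrix (Fin 2) (Fin 2) F := Matrix.of fun j k => v i j k

/-- The slices of a `2×2×2` hypercube along the second index. -/
def slice2 {F : Type*} (v : Fin 2 → Fin 2 → Fin 2 → F) (j : Fin 2) :
    Matrix (Fin 2) (Fin 2) F := Matrix.of fun i k => v i j k

/-- The slices of a `2×2×2` hypercube along the third index. -/
def slice3 {F : Type*} (v : Fin 2 → Fin 2 → Fin 2 → F) (k : Fin 2) :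
    Matrix (Fin 2) (Fin 2) F := Matrix.of fun i j => v i j k

lemma vm1 {F : Type*} [Field F] (v : Fin 2 → Fin 2 → Fin 2 → F)
    (x y : Fin 2 → F) (k : Fin 2) :
    Matrix.vecMul y (∑ i, x i • slice1 v i) k = ∑ i, ∑ j, v i j k * x i * y j := by
  simp [Matrix.vecMul, dotProduct, slice1, Matrix.sum_apply, Fin.sum_univ_two]
  ring

lemma vm2 {F : Type*} [Field F] (v : Fin 2 → Fin 2 → Fin 2 → F)
    (x c : Fin 2 → F) (k : Fin 2) :
    Matrix.vecMul x (∑ j, c j • slice2 v j) k = ∑ i, ∑ j, v i j k * x i * c j := by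
  simp [Matrix.vecMul, dotProduct, slice2, Matrix.sum_apply, Fin.sum_univ_two]
  ring

lemma vm3 {F : Type*} [Field F] (v : Fin 2 → Fin 2 → Fin 2 → F)
    (x c y : Fin 2 → F) :
    ∑ j, Matrix.vecMul x (∑ k, c k • slice3 v k) j * y j
      = ∑ k, c k * (∑ i, ∑ j, v i j k * x i * y j) := by
  simp [Matrix.vecMul, dotProduct, slice3, Matrix.sum_apply, Fin.sum_univ_two]
  ring


/-- A `2×2×2` hypercube (tensor in `F² ⊗ F² ⊗ F²` in coordinates) is
nonsingular if the contraction by every nonzero functional (with coordinates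
`c` in the dual basis) along each of the three factors is an invertible
`2 × 2` matrix. -/
def HNonsingular {F : Type*} [Field F] (v : Fin 2 → Fin 2 → Fin 2 → F) : Prop :=
  ∀ c : Fin 2 → F, c ≠ 0 →
    IsUnit (∑ i, c i • slice1 v i) ∧ IsUnit (∑ j, c j • slice2 v j) ∧
      IsUnit (∑ k, c k • slice3 v k)

lemma stmt4_aux (F : Type*) [Field F] [Fintype F]
    (v : Fin 2 → Fin 2 → Fin 2 → F) :
    (∀ c : Fin 2 → F, c ≠ 0 →
    IsUnit (∑ i, c i • slice1 v i) ∧ IsUnit (∑ j, c j • slice2 v j) ∧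
      IsUnit (∑ k, c k • slice3 v k)) ↔
      ∀ x y : Fin 2 → F,
        (fun k => ∑ i, ∑ j, v i j k * x i * y j) = (0 : Fin 2 → F) →
          x = 0 ∨ y = 0 := by
  constructor
  · rintro h x y hxy
    by_cases hx : x = 0
    · exact Or.inl hx
    · right
      have hA : IsUnit ((∑ i, x i • slice1 v i).det) :=
        (Matrix.isUnit_iff_isUnit_det _).mp (h x hx).1
      by_contra hy
      have hv : Matrix.vecMul y (∑ i, x i • slice1 v i) = 0 := by
        funext k
        rw [vm1]
        exact congrFun hxy k
      have : (∑ i, x i • slice1 v i).det = 0 :=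
        Matrix.exists_vecMul_eq_zero_iff.mp ⟨y, hy, hv⟩
      rw [this] at hA
      simp at hA
  · intro h c hc
    refine ⟨?_, ?_, ?_⟩
    · rw [Matrix.isUnit_iff_isUnit_det, isUnit_iff_ne_zero]
      intro hdet
      obtain ⟨y, hy, hv⟩ := Matrix.exists_vecMul_eq_zero_iff.mpr hdet
      have : (fun k => ∑ i, ∑ j, v i j k * c i * y j) = (0 : Fin 2 → F) := by
        funext k; rw [← vm1, hv]
      exact (h c y this).elim (fun h' => hc h') (fun h' => hy h')
    · rw [Matrix.isUnit_iff_isUnit_det, isUnit_iff_ne_zero]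
      intro hdet
      obtain ⟨x, hx, hv⟩ := Matrix.exists_vecMul_eq_zero_iff.mpr hdet
      have : (fun k => ∑ i, ∑ j, v i j k * x i * c j) = (0 : Fin 2 → F) := by
        funext k; rw [← vm2, hv]
      exact (h x c this).elim (fun h' => hx h') (fun h' => hc h')
    · rw [Matrix.isUnit_iff_isUnit_det, isUnit_iff_ne_zero]
      intro hdet
      obtain ⟨x, hx, hv⟩ := Matrix.exists_vecMul_eq_zero_iff.mpr hdet
      -- left multiplication matrix by x
      set M : Matrix (Fin 2) (Fin 2) F :=
        Matrix.of (fun k j => ∑ i, v i j k * x i) with hM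
      have hMmul : ∀ z : Fin 2 → F, M.mulVec z = fun k => ∑ i, ∑ j, v i j k * x i * z j := by
        intro z; funext k
        simp [M, Matrix.mulVec, dotProduct, Fin.sum_univ_two]
        ring
      have hMdet : M.det ≠ 0 := by
        intro h0
        obtain ⟨z, hz, hvz⟩ := Matrix.exists_mulVec_eq_zero_iff.mpr h0
        have : (fun k => ∑ i, ∑ j, v i j k * x i * z j) = (0 : Fin 2 → F) := by
          rw [← hMmul]; exact hvz
        exact (h x z this).elim (fun h' => hx h') (fun h' => hz h')
      obtain ⟨k0, hk0⟩ := Function.ne_iff.mp hc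
      set z : Fin 2 → F := M⁻¹.mulVec (Pi.single k0 1) with hz
      have hMz : M.mulVec z = Pi.single k0 1 := by
        rw [hz, Matrix.mulVec_mulVec, Matrix.mul_nonsing_inv _ (isUnit_iff_ne_zero.mpr hMdet), Matrix.one_mulVec]
      have key : ∑ j, Matrix.vecMul x (∑ k, c k • slice3 v k) j * z j = c k0 := by
        rw [vm3]
        have : ∀ k, (∑ i, ∑ j, v i j k * x i * z j) = (Pi.single k0 1 : Fin 2 → F) k := by
          intro k; exact congrFun ((hMmul z).symm.trans hMz) k
        simp only [this]
        fin_cases k0 <;> simp [Fin.sum_univ_two, Pi.single_apply]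
      rw [hv] at key
      simp at key
      exact hk0 key.symm

/-- Over a finite field, a tensor `v ∈ F² ⊗ F² ⊗ F²` is nonsingular iff the
bilinear multiplication on `F²` defined by its slices has no zero divisors. -/
theorem stmt4 (F : Type*) [Field F] [Fintype F]
    (v : Fin 2 → Fin 2 → Fin 2 → F) :
    HNonsingular v ↔
      ∀ x y : Fin 2 → F,
        (fun k => ∑ i, ∑ j, v i j k * x i * y j) = (0 : Fin 2 → F) →
          x = 0 ∨ y = 0 := by
  unfold HNonsingular
  exact stmt4_aux F v
end

section
/- Let F be a field and let D be a (not necessarily associative) unital division algebra of dimension 2 over F, where F is contained in the center/nucleus of D (i.e., D is a 2-dimensional semifield over its center F). If F is finite, then D is associative and commutative, hence a field isomorphic to the quadratic extension F_{q²} of F = F_q. -/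
/-!
Pick `a ∈ D` with `D = F ∙ 1 ⊕ F ∙ a` and write `a * a = e • 1 + f • a`. Since scalars are central,
the product of `c • 1 + d • a` and `c' • 1 + d' • a` is given by the multiplication of
`F[X] ⧸ (X² - f X - e)`, so `D` is commutative and associative. Without zero
divisors the finite ring `D` is then a field with `q²` elements, and finite fields are determined
by their cardinality.
-/

open Module

theorem exists_forall_eq_smul_add_smul_of_finrank_eq_two {K V : Type*} [Field K] [AddCommGroup V]
    [Module K V] (h : finrank K V = 2) {v : V} (hv : v ≠ 0) :
    ∃ a : V, ∀ x : V, ∃ c d : K, x = c • v + d • a := by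
  have : FiniteDimensional K V := .of_finrank_eq_succ h
  obtain ⟨a, ha⟩ := exists_linearIndependent_pair_of_one_lt_finrank (h ▸ one_lt_two) hv
  have hspan := ha.span_eq_top_of_card_eq_finrank' (by simp [h])
  refine ⟨a, fun x ↦ ?_⟩
  obtain ⟨c, hc⟩ := Submodule.mem_span_range_iff_exists_fun K |>.mp (hspan ▸ Submodule.mem_top)
  exact ⟨c 0, c 1, by simpa [Fin.sum_univ_two] using hc.symm⟩

section SpannedByOneAndElement

variable {R D : Type*} [CommRing R] [NonAssocRing D] [Module R D]
  (hcl : ∀ (c : R) (x y : D), (c • x) * y = c • (x * y))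
  (hcr : ∀ (c : R) (x y : D), x * (c • y) = c • (x * y))
  {a : D}

include hcl hcr in
theorem smul_one_add_smul_mul_smul_one_add_smul {e f : R} (ha : a * a = e • 1 + f • a)
    (c d c' d' : R) :
    (c • (1 : D) + d • a) * (c' • 1 + d' • a) =
      (c * c' + d * d' * e) • 1 + (c * d' + d * c' + d * d' * f) • a := by
  simp only [add_mul, mul_add, hcl, hcr, one_mul, mul_one, ha, smul_add, smul_smul]
  module

variable (hspan : ∀ x : D, ∃ c d : R, x = c • 1 + d • a)

include hcl hcr hspan

theorem mul_comm_of_forall_eq_smul_one_add_smul (x y : D) : x * y = y * x := by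
  obtain ⟨e, f, ha⟩ := hspan (a * a)
  obtain ⟨c, d, rfl⟩ := hspan x
  obtain ⟨c', d', rfl⟩ := hspan y
  simp only [smul_one_add_smul_mul_smul_one_add_smul hcl hcr ha]
  module

theorem mul_assoc_of_forall_eq_smul_one_add_smul (x y z : D) : x * y * z = x * (y * z) := by
  obtain ⟨e, f, ha⟩ := hspan (a * a)
  obtain ⟨c, d, rfl⟩ := hspan x
  obtain ⟨c', d', rfl⟩ := hspan y
  obtain ⟨c'', d'', rfl⟩ := hspan z
  simp only [smul_one_add_smul_mul_smul_one_add_smul hcl hcr ha]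
  module

end SpannedByOneAndElement

theorem nonempty_ringEquiv_galoisField_of_card_eq {D : Type*} [NonAssocRing D] [Nontrivial D]
    [Fintype D] (hassoc : ∀ x y z : D, x * y * z = x * (y * z)) (hcomm : ∀ x y : D, x * y = y * x)
    (hdiv : ∀ x y : D, x * y = 0 → x = 0 ∨ y = 0) (p m : ℕ) [Fact p.Prime] (hm : m ≠ 0)
    (hcard : Fintype.card D = p ^ m) : Nonempty (D ≃+* GaloisField p m) := by
  let _ : CommRing D := { ‹NonAssocRing D› with mul_assoc := hassoc, mul_comm := hcomm }
  have : IsDomain D := @NoZeroDivisors.to_isDomain D _ _ ⟨hdiv _ _⟩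
  classical
  let _ : Field D := Fintype.fieldOfDomain D
  have : Fintype (GaloisField p m) := .ofFinite _
  refine ⟨FiniteField.ringEquivOfCardEq ?_⟩
  rw [hcard, Fintype.card_eq_nat_card, GaloisField.card p m hm]

/-- Dickson's theorem: a (not necessarily associative) unital division algebra
`D` of dimension `2` over a finite field `F` contained in its center is
associative and commutative, hence a field isomorphic to `F_{q²}`. -/
theorem stmt5 (F D : Type*) [Field F] [Fintype F]
    [NonAssocRing D] [Nontrivial D] [Module F D]
    -- `F` lies in the center/nucleus of `D`: scalars commute with products
    (hcl : ∀ (c : F) (x y : D), (c • x) * y = c • (x * y))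
    (hcr : ∀ (c : F) (x y : D), x * (c • y) = c • (x * y))
    -- `D` is a division algebra: no zero divisors
    (hdiv : ∀ x y : D, x * y = 0 → x = 0 ∨ y = 0)
    -- `D` is 2-dimensional over `F`
    (hdim : Module.finrank F D = 2)
    (p n : ℕ) [Fact p.Prime] (hcard : Fintype.card F = p ^ n) :
    (∀ x y z : D, x * y * z = x * (y * z)) ∧ (∀ x y : D, x * y = y * x) ∧
      Nonempty (D ≃+* GaloisField p (2 * n)) := by
  obtain ⟨a, hspan⟩ := exists_forall_eq_smul_add_smul_of_finrank_eq_two hdim (one_ne_zero' D)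
  have hassoc := mul_assoc_of_forall_eq_smul_one_add_smul hcl hcr hspan
  have hcomm := mul_comm_of_forall_eq_smul_one_add_smul hcl hcr hspan
  have : FiniteDimensional F D := .of_finrank_eq_succ hdim
  have : Fintype D := @Fintype.ofFinite D (Module.finite_of_finite F)
  have hn : n ≠ 0 := by
    rintro rfl
    simpa [hcard] using Fintype.one_lt_card (α := F)
  have hcardD : Fintype.card D = p ^ (2 * n) := by
    rw [card_eq_pow_finrank (K := F), hdim, hcard, ← pow_mul, mul_comm]
  exact ⟨hassoc, hcomm,
    nonempty_ringEquiv_galoisField_of_card_eq hassoc hcomm hdiv p (2 * n) (by omega) hcardD⟩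
end

section
/- Let F be a field and let x = a·(y₁ ⊗ y₂ ⊗ y₃) + b·(y₁ ⊗ z₂ ⊗ z₃) + 1·(w₁ ⊗ z₂ ⊗ y₃) ∈ F² ⊗ F² ⊗ F², where a, b ∈ F are nonzero, y₁, w₁ are linearly independent, y₂, z₂ are linearly independent, and y₃, z₃ are linearly independent. Then x is a singular tensor: there is a nonzero functional on one of the three factors whose contraction of x is a singular 2×2 tensor. -/
open TensorProduct

variable (F : Type*) [Field F]

/-- Every point of a plane of type `(2,2,2)` through three points of the Segre
variety is singular. -/
theorem stmt9 (F : Type*) [Field F] (a b : F) (ha : a ≠ 0) (hb : b ≠ 0)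
    (y₁ w₁ y₂ z₂ y₃ z₃ : Fin 2 → F)
    (h1 : LinearIndependent F ![y₁, w₁])
    (h2 : LinearIndependent F ![y₂, z₂])
    (h3 : LinearIndependent F ![y₃, z₃]) :
    TensorSingular F
      (a • (y₁ ⊗ₜ[F] (y₂ ⊗ₜ[F] y₃)) + b • (y₁ ⊗ₜ[F] (z₂ ⊗ₜ[F] z₃)) +
        w₁ ⊗ₜ[F] (z₂ ⊗ₜ[F] y₃)) := by
  have hy1 : y₁ ≠ 0 := by
    have := h1.ne_zero 0
    simpa using this
  set w : (Fin 2 → F) →ₗ[F] F :=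
    y₁ 1 • LinearMap.proj 0 - y₁ 0 • LinearMap.proj 1 with hw
  refine ⟨w, ?_, Or.inl ?_⟩
  · intro h
    apply hy1
    have h0 := congrArg (fun f => f ![(1:F), 0]) h
    have h1' := congrArg (fun f => f ![(0:F), 1]) h
    simp [hw] at h0 h1'
    ext i
    fin_cases i <;> simp [h0, h1']
  · simp only [map_add, map_smul, con1, toMat, hw, LinearMap.coe_comp,
      Function.comp_apply, TensorProduct.map_tmul, LinearMap.id_coe, id_eq,
      LinearEquiv.coe_coe, TensorProduct.lid_tmul, LinearMap.sub_apply,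
      LinearMap.smul_apply, LinearMap.proj_apply, smul_eq_mul,
      TensorProduct.smul_tmul', TensorProduct.lift.tmul, LinearMap.coe_mk,
      AddHom.coe_mk]
    rw [Matrix.det_fin_two]
    simp [Matrix.of_apply, Pi.smul_apply, smul_eq_mul]
    ring
end

section
/- Let F be a field and let x = a·(y₁ ⊗ y₂ ⊗ y₃) + b·(y₁ ⊗ z₂ ⊗ z₃) + (w₁ ⊗ z₂ ⊗ y₃) with a, b ∈ F nonzero, y₁, w₁ linearly independent, y₂, z₂ linearly independent, and y₃, z₃ linearly independent. Then x has tensor rank exactly 3. -/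
open TensorProduct

variable (F : Type*) [Field F]

/-!
`x` is not a sum of two pure tensors. Contract the first factor by a functional `φ`: the
`2 × 2` slice of `x` has determinant `φ(y₁)² · a b · det[y₂, z₂] · det[y₃, z₃]`, while the slice
of a sum `f₀ ⊗ g₀ ⊗ h₀ + f₁ ⊗ g₁ ⊗ h₁` has determinant `φ(f₀) φ(f₁) · det g · det h`. Let `c₁`
vanish on `y₁` with `c₁ w₁ = 1`, and `c₀ y₁ = 1`. The functional `φ = c₁(fᵢ) c₀ - c₀(fᵢ) c₁`
kills `fᵢ` and takes the value `c₁(fᵢ)` at `y₁`, so comparing determinants forces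
`c₁(f₀) = c₁(f₁) = 0`. Then the `c₁`-slice of the sum vanishes, whereas the `c₁`-slice of `x`
is `z₂ ⊗ y₃ ≠ 0`.
-/

open Matrix

theorem Matrix.det_vecMulVec_add_vecMulVec {R : Type*} [CommRing R] (u v u' v' : Fin 2 → R) :
    (vecMulVec u v + vecMulVec u' v').det = (of ![u, u']).det * (of ![v, v']).det := by
  have h : vecMulVec u v + vecMulVec u' v' = (of ![u, u'])ᵀ * of ![v, v'] := by
    ext i j
    simp [vecMulVec_apply, mul_apply, Fin.sum_univ_two]
  rw [h, det_mul, det_transpose]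

theorem Matrix.det_ne_zero_of_linearIndependent_rows {m K : Type*} [Fintype m] [DecidableEq m]
    [Field K] {A : Matrix m m K} (h : LinearIndependent K fun i => A i) : A.det ≠ 0 :=
  ((isUnit_iff_isUnit_det A).mp (linearIndependent_rows_iff_isUnit.mp h)).ne_zero

theorem LinearIndependent.exists_dual_apply_eq_single {K V ι : Type*} [Field K] [AddCommGroup V]
    [Module K V] [DecidableEq ι] {v : ι → V} (hv : LinearIndependent K v) (i : ι) :
    ∃ c : V →ₗ[K] K, ∀ j, c (v j) = (Pi.single i 1 : ι → K) j := by
  obtain ⟨c, hc⟩ := LinearMap.exists_extend (Finsupp.lapply i ∘ₗ hv.repr)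
  refine ⟨c, fun j => ?_⟩
  have hj : v j ∈ Submodule.span K (Set.range v) := Submodule.subset_span ⟨j, rfl⟩
  have hcj := congr($hc ⟨v j, hj⟩)
  simp only [LinearMap.comp_apply, Submodule.subtype_apply, Finsupp.lapply_apply] at hcj
  rw [hcj, hv.repr_eq_single j _ rfl, Finsupp.single_apply, Pi.single_apply, eq_comm]

variable {F}

def IsSumOfPureTensors (v : (Fin 2 → F) ⊗[F] ((Fin 2 → F) ⊗[F] (Fin 2 → F))) (k : ℕ) : Prop :=
  ∃ f g h : Fin k → (Fin 2 → F), v = ∑ i, f i ⊗ₜ[F] (g i ⊗ₜ[F] h i)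

namespace IsSumOfPureTensors

variable {v : (Fin 2 → F) ⊗[F] ((Fin 2 → F) ⊗[F] (Fin 2 → F))} {k : ℕ}

theorem succ (hv : IsSumOfPureTensors v k) : IsSumOfPureTensors v (k + 1) := by
  obtain ⟨f, g, h, rfl⟩ := hv
  exact ⟨Fin.snoc f 0, Fin.snoc g 0, Fin.snoc h 0, by simp [Fin.sum_univ_castSucc]⟩

theorem mono {m : ℕ} (hv : IsSumOfPureTensors v k) (hkm : k ≤ m) : IsSumOfPureTensors v m :=
  Nat.le_induction hv (fun _ _ => succ) m hkm

end IsSumOfPureTensors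

theorem tensorRank_eq_succ {v : (Fin 2 → F) ⊗[F] ((Fin 2 → F) ⊗[F] (Fin 2 → F))} {n : ℕ}
    (hv : IsSumOfPureTensors v (n + 1)) (hn : ¬ IsSumOfPureTensors v n) :
    tensorRank F v = n + 1 :=
  le_antisymm (Nat.sInf_le hv) <| le_csInf ⟨_, hv⟩ fun _ (hk : IsSumOfPureTensors v _) =>
    Nat.succ_le_of_lt <| lt_of_not_ge fun hkn => hn (hk.mono hkn)

theorem toMat_tmul (q r : Fin 2 → F) : toMat F (q ⊗ₜ[F] r) = vecMulVec q r := by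
  ext i j
  simp [toMat, vecMulVec_apply]

theorem toMat_con1_tmul (w : (Fin 2 → F) →ₗ[F] F) (p q r : Fin 2 → F) :
    toMat F (con1 F w (p ⊗ₜ[F] (q ⊗ₜ[F] r))) = w p • vecMulVec q r := by
  simp [con1, toMat_tmul]

theorem toMat_con1_sum {k : ℕ} (w : (Fin 2 → F) →ₗ[F] F) (f g h : Fin k → Fin 2 → F) :
    toMat F (con1 F w (∑ i, f i ⊗ₜ[F] (g i ⊗ₜ[F] h i))) =
      ∑ i, w (f i) • vecMulVec (g i) (h i) := by
  simp [toMat_con1_tmul]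

theorem det_toMat_con1_sum_two (w : (Fin 2 → F) →ₗ[F] F) (f g h : Fin 2 → Fin 2 → F) :
    (toMat F (con1 F w (∑ i, f i ⊗ₜ[F] (g i ⊗ₜ[F] h i)))).det =
      (∏ i, w (f i)) * ((of g).det * (of h).det) := by
  rw [toMat_con1_sum, Fin.sum_univ_two, ← smul_vecMulVec, ← smul_vecMulVec,
    det_vecMulVec_add_vecMulVec]
  simp only [det_fin_two, Fin.prod_univ_two, of_apply, cons_val', cons_val_fin_one, cons_val_zero,
    cons_val_one, Pi.smul_apply, smul_eq_mul]
  ring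

section FourthOrbit

variable (a b : F) (y₁ w₁ y₂ z₂ y₃ z₃ : Fin 2 → F)

theorem toMat_con1_fourthOrbit (w : (Fin 2 → F) →ₗ[F] F) :
    toMat F (con1 F w (a • (y₁ ⊗ₜ[F] (y₂ ⊗ₜ[F] y₃)) + b • (y₁ ⊗ₜ[F] (z₂ ⊗ₜ[F] z₃)) +
        w₁ ⊗ₜ[F] (z₂ ⊗ₜ[F] y₃))) =
      vecMulVec (w y₁ • a • y₂ + w w₁ • z₂) y₃ + vecMulVec (w y₁ • b • z₂) z₃ := by
  simp only [map_add, map_smul, toMat_con1_tmul, add_vecMulVec, smul_vecMulVec]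
  module

theorem det_toMat_con1_fourthOrbit (w : (Fin 2 → F) →ₗ[F] F) :
    (toMat F (con1 F w (a • (y₁ ⊗ₜ[F] (y₂ ⊗ₜ[F] y₃)) + b • (y₁ ⊗ₜ[F] (z₂ ⊗ₜ[F] z₃)) +
        w₁ ⊗ₜ[F] (z₂ ⊗ₜ[F] y₃)))).det =
      w y₁ ^ 2 * (a * b * (of ![y₂, z₂]).det * (of ![y₃, z₃]).det) := by
  rw [toMat_con1_fourthOrbit, det_vecMulVec_add_vecMulVec]
  simp only [det_fin_two, of_apply, cons_val', cons_val_fin_one, cons_val_zero, cons_val_one,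
    Pi.add_apply, Pi.smul_apply, smul_eq_mul]
  ring

variable {a b y₁ w₁ y₂ z₂ y₃ z₃}

theorem not_isSumOfPureTensors_two_fourthOrbit (ha : a ≠ 0) (hb : b ≠ 0)
    (h1 : LinearIndependent F ![y₁, w₁]) (h2 : LinearIndependent F ![y₂, z₂])
    (h3 : LinearIndependent F ![y₃, z₃]) :
    ¬ IsSumOfPureTensors (a • (y₁ ⊗ₜ[F] (y₂ ⊗ₜ[F] y₃)) + b • (y₁ ⊗ₜ[F] (z₂ ⊗ₜ[F] z₃)) +
        w₁ ⊗ₜ[F] (z₂ ⊗ₜ[F] y₃)) 2 := by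
  rintro ⟨f, g, h, hrep⟩
  obtain ⟨c₀, hc₀⟩ := h1.exists_dual_apply_eq_single 0
  obtain ⟨c₁, hc₁⟩ := h1.exists_dual_apply_eq_single 1
  have hc₀y : c₀ y₁ = 1 := by simpa using hc₀ 0
  have hc₁y : c₁ y₁ = 0 := by simpa using hc₁ 0
  have hc₁w : c₁ w₁ = 1 := by simpa using hc₁ 1
  have hD : a * b * (of ![y₂, z₂]).det * (of ![y₃, z₃]).det ≠ 0 := by
    have := det_ne_zero_of_linearIndependent_rows (A := of ![y₂, z₂]) h2
    have := det_ne_zero_of_linearIndependent_rows (A := of ![y₃, z₃]) h3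
    positivity
  have hc₁f : ∀ i, c₁ (f i) = 0 := by
    intro i
    set φ := c₁ (f i) • c₀ - c₀ (f i) • c₁
    have hφf : φ (f i) = 0 := by simp [φ, mul_comm]
    have hφy : φ y₁ = c₁ (f i) := by simp [φ, hc₀y, hc₁y]
    have hdet := det_toMat_con1_fourthOrbit a b y₁ w₁ y₂ z₂ y₃ z₃ φ
    rw [hrep, det_toMat_con1_sum_two, Finset.prod_eq_zero (Finset.mem_univ i) hφf, zero_mul,
      eq_comm, mul_eq_zero, or_iff_left hD, hφy] at hdet
    exact pow_eq_zero_iff two_ne_zero |>.mp hdet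
  have hslice : vecMulVec z₂ y₃ = 0 := by
    have := toMat_con1_fourthOrbit a b y₁ w₁ y₂ z₂ y₃ z₃ c₁
    rw [hrep, toMat_con1_sum] at this
    simpa [hc₁f, hc₁y, hc₁w] using this.symm
  rcases vecMulVec_eq_zero.mp hslice with hz | hy
  · exact h2.ne_zero 1 hz
  · exact h3.ne_zero 0 hy

end FourthOrbit

/-- The singular tensors of the fourth orbit have tensor rank exactly `3`. -/
theorem stmt10 (F : Type*) [Field F] (a b : F) (ha : a ≠ 0) (hb : b ≠ 0)
    (y₁ w₁ y₂ z₂ y₃ z₃ : Fin 2 → F)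
    (h1 : LinearIndependent F ![y₁, w₁])
    (h2 : LinearIndependent F ![y₂, z₂])
    (h3 : LinearIndependent F ![y₃, z₃]) :
    tensorRank F
      (a • (y₁ ⊗ₜ[F] (y₂ ⊗ₜ[F] y₃)) + b • (y₁ ⊗ₜ[F] (z₂ ⊗ₜ[F] z₃)) +
        w₁ ⊗ₜ[F] (z₂ ⊗ₜ[F] y₃)) = 3 :=
  tensorRank_eq_succ
    ⟨![a • y₁, b • y₁, w₁], ![y₂, z₂, z₂], ![y₃, z₃, y₃], by simp [Fin.sum_univ_three, smul_tmul']⟩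
    (not_isSumOfPureTensors_two_fourthOrbit ha hb h1 h2 h3)
end

section
/- Let F be a field. Any two tensors of the form x = a·(y₁⊗y₂⊗y₃) + b·(y₁⊗z₂⊗z₃) + (w₁⊗z₂⊗y₃) and x' = a'·(y₁'⊗y₂'⊗y₃') + b'·(y₁'⊗z₂'⊗z₃') + (w₁'⊗z₂'⊗y₃'), with a, b, a', b' ∈ F* and each of the pairs (y₁,w₁), (y₂,z₂), (y₃,z₃), (y₁',w₁'), (y₂',z₂'), (y₃',z₃') linearly independent in F², are equivalent under GL(2,F) × GL(2,F) × GL(2,F) up to a nonzero scalar: there exist g₁, g₂, g₃ ∈ GL(2,F) and λ ∈ F* with (g₁ ⊗ g₂ ⊗ g₃)(x) = λ x'. -/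
set_option synthInstance.maxHeartbeats 1000000


open TensorProduct

lemma glue_aux (F : Type*) [Field F] (v w v' w' : Fin 2 → F)
    (hv : LinearIndependent F ![v, w]) (hv' : LinearIndependent F ![v', w'])
    (t u : F) (ht : t ≠ 0) (hu : u ≠ 0) :
    ∃ g : (Fin 2 → F) ≃ₗ[F] (Fin 2 → F), g v = t • v' ∧ g w = u • w' := by
  have hsc : LinearIndependent F ![t • v', u • w'] := by
    have := hv'.units_smul ![Units.mk0 t ht, Units.mk0 u hu]
    convert this using 1
    funext i
    fin_cases i <;> simp
  have hcard : Fintype.card (Fin 2) = Module.finrank F (Fin 2 → F) := by simp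
  let B := basisOfLinearIndependentOfCardEqFinrank hv hcard
  let B' := basisOfLinearIndependentOfCardEqFinrank hsc hcard
  refine ⟨B.equiv B' (Equiv.refl _), ?_, ?_⟩
  · have := B.equiv_apply (e := Equiv.refl _) 0 B'
    simpa [B, B', coe_basisOfLinearIndependentOfCardEqFinrank] using this
  · have := B.equiv_apply (e := Equiv.refl _) 1 B'
    simpa [B, B', coe_basisOfLinearIndependentOfCardEqFinrank] using this

/-- Any two singular rank-3 tensors of the canonical form are equivalent under
`GL(2,F)³` up to a nonzero scalar (transitivity on the orbit `O₄`). -/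
theorem stmt11 (F : Type*) [Field F] (a b a' b' : F)
    (ha : a ≠ 0) (hb : b ≠ 0) (ha' : a' ≠ 0) (hb' : b' ≠ 0)
    (y₁ w₁ y₂ z₂ y₃ z₃ y₁' w₁' y₂' z₂' y₃' z₃' : Fin 2 → F)
    (h1 : LinearIndependent F ![y₁, w₁])
    (h2 : LinearIndependent F ![y₂, z₂])
    (h3 : LinearIndependent F ![y₃, z₃])
    (h1' : LinearIndependent F ![y₁', w₁'])
    (h2' : LinearIndependent F ![y₂', z₂'])
    (h3' : LinearIndependent F ![y₃', z₃']) :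
    ∃ (g₁ g₂ g₃ : (Fin 2 → F) ≃ₗ[F] (Fin 2 → F)) (c : Fˣ),
      TensorProduct.map g₁.toLinearMap
        (TensorProduct.map g₂.toLinearMap g₃.toLinearMap)
        (a • (y₁ ⊗ₜ[F] (y₂ ⊗ₜ[F] y₃)) + b • (y₁ ⊗ₜ[F] (z₂ ⊗ₜ[F] z₃)) +
          w₁ ⊗ₜ[F] (z₂ ⊗ₜ[F] y₃)) =
      (c : F) •
        (a' • (y₁' ⊗ₜ[F] (y₂' ⊗ₜ[F] y₃')) + b' • (y₁' ⊗ₜ[F] (z₂' ⊗ₜ[F] z₃')) +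
          w₁' ⊗ₜ[F] (z₂' ⊗ₜ[F] y₃')) := by
  obtain ⟨g₁, hg₁y, hg₁w⟩ := glue_aux F y₁ w₁ y₁' w₁' h1 h1' 1 (a / a')
    one_ne_zero (div_ne_zero ha ha')
  obtain ⟨g₂, hg₂y, hg₂z⟩ := glue_aux F y₂ z₂ y₂' z₂' h2 h2' 1 1
    one_ne_zero one_ne_zero
  obtain ⟨g₃, hg₃y, hg₃z⟩ := glue_aux F y₃ z₃ y₃' z₃' h3 h3' (a' / a) (b' / b)
    (div_ne_zero ha' ha) (div_ne_zero hb' hb)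
  refine ⟨g₁, g₂, g₃, 1, ?_⟩
  simp only [map_add, map_smul, map_tmul, LinearEquiv.coe_coe, hg₁y, hg₁w, hg₂y, hg₂z,
    hg₃y, hg₃z, one_smul, Units.val_one]
  simp only [tmul_smul, ← smul_tmul', smul_smul]
  match_scalars <;> field_simp
end

section
/- Let F be a field. If v ∈ F² ⊗ F² ⊗ F² is a nonsingular tensor, then v has tensor rank at least 3. Equivalently, every tensor of rank at most 2 in F² ⊗ F² ⊗ F² is singular. -/
open TensorProduct

variable (F : Type*) [Field F]

section SumOfPureTensors

variable {R M N P : Type*} [CommSemiring R] [AddCommMonoid M] [AddCommMonoid N]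
  [AddCommMonoid P] [Module R M] [Module R N] [Module R P]

theorem TensorProduct.exists_sum_tmul_tmul_eq (x : M ⊗[R] (N ⊗[R] P)) :
    ∃ (k : ℕ) (a : Fin k → M) (b : Fin k → N) (c : Fin k → P),
      x = ∑ j, a j ⊗ₜ (b j ⊗ₜ c j) := by
  induction x with
  | zero => exact ⟨0, finZeroElim, finZeroElim, finZeroElim, by simp⟩
  | tmul x t =>
    obtain ⟨k, b, c, rfl⟩ := exists_sum_tmul_eq t
    exact ⟨k, fun _ ↦ x, b, c, tmul_sum _ _ _⟩
  | add x y hx hy =>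
    obtain ⟨k₁, a₁, b₁, c₁, rfl⟩ := hx
    obtain ⟨k₂, a₂, b₂, c₂, rfl⟩ := hy
    exact ⟨k₁ + k₂, Fin.addCases a₁ a₂, Fin.addCases b₁ b₂, Fin.addCases c₁ c₂,
      by simp [Fin.sum_univ_add]⟩

theorem TensorProduct.exists_sum_tmul_tmul_eq_of_le {x : M ⊗[R] (N ⊗[R] P)} {k n : ℕ}
    (hkn : k ≤ n) (hx : ∃ (a : Fin k → M) (b : Fin k → N) (c : Fin k → P),
      x = ∑ j, a j ⊗ₜ (b j ⊗ₜ c j)) :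
    ∃ (a : Fin n → M) (b : Fin n → N) (c : Fin n → P), x = ∑ j, a j ⊗ₜ (b j ⊗ₜ c j) := by
  induction n, hkn using Nat.le_induction with
  | base => exact hx
  | succ n _ ih =>
    obtain ⟨a, b, c, rfl⟩ := ih
    exact ⟨Fin.snoc a 0, Fin.snoc b 0, Fin.snoc c 0, by simp [Fin.sum_univ_castSucc]⟩

end SumOfPureTensors

theorem exists_ne_zero_apply_eq_zero_of_one_lt_finrank {K V : Type*} [Field K]
    [AddCommGroup V] [Module K V] [FiniteDimensional K V] (hV : 1 < Module.finrank K V)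
    (a : V) : ∃ w : V →ₗ[K] K, w ≠ 0 ∧ w a = 0 := by
  have hlt : K ∙ a < ⊤ := by
    refine lt_top_iff_ne_top.2 fun htop ↦ ?_
    have := finrank_span_le_card (R := K) ({a} : Set V)
    rw [htop, finrank_top] at this
    simp only [Set.toFinset_singleton, Finset.card_singleton] at this
    omega
  obtain ⟨w, hw, hker⟩ := (K ∙ a).exists_le_ker_of_lt_top hlt
  exact ⟨w, hw, hker (Submodule.mem_span_singleton_self a)⟩

section TwoByTwoByTwo

variable {F}

theorem det_toMat_tmul (y z : Fin 2 → F) : (toMat F (y ⊗ₜ[F] z)).det = 0 := by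
  simp only [toMat, lift.tmul, LinearMap.coe_mk, AddHom.coe_mk, Matrix.det_fin_two,
    Matrix.of_apply]
  ring

theorem con1_tmul (w : (Fin 2 → F) →ₗ[F] F) (a : Fin 2 → F)
    (t : (Fin 2 → F) ⊗[F] (Fin 2 → F)) : con1 F w (a ⊗ₜ[F] t) = w a • t := by
  simp [con1]

theorem TensorNonsingular.not_tensorSingular
    {v : (Fin 2 → F) ⊗[F] ((Fin 2 → F) ⊗[F] (Fin 2 → F))} (hv : TensorNonsingular F v) :
    ¬ TensorSingular F v := by
  rintro ⟨w, hw, h | h | h⟩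
  · exact ((Matrix.isUnit_iff_isUnit_det _).1 (hv w hw).1).ne_zero h
  · exact ((Matrix.isUnit_iff_isUnit_det _).1 (hv w hw).2.1).ne_zero h
  · exact ((Matrix.isUnit_iff_isUnit_det _).1 (hv w hw).2.2).ne_zero h

theorem exists_sum_tmul_tmul_eq_tensorRank
    (v : (Fin 2 → F) ⊗[F] ((Fin 2 → F) ⊗[F] (Fin 2 → F))) :
    ∃ f g h : Fin (tensorRank F v) → (Fin 2 → F), v = ∑ i, f i ⊗ₜ[F] (g i ⊗ₜ[F] h i) := by
  obtain ⟨k, f, g, h, hk⟩ := TensorProduct.exists_sum_tmul_tmul_eq v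
  exact Nat.sInf_mem (s := {n | ∃ f g h : Fin n → (Fin 2 → F),
    v = ∑ i, f i ⊗ₜ[F] (g i ⊗ₜ[F] h i)}) ⟨k, f, g, h, hk⟩

/-- Contracting the first factor by a functional that kills `f 0` leaves a single pure tensor. -/
theorem tensorSingular_sum_two (f g h : Fin 2 → (Fin 2 → F)) :
    TensorSingular F (∑ i, f i ⊗ₜ[F] (g i ⊗ₜ[F] h i)) := by
  obtain ⟨w, hw, hf⟩ := exists_ne_zero_apply_eq_zero_of_one_lt_finrank
    (by simp : 1 < Module.finrank F (Fin 2 → F)) (f 0)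
  refine ⟨w, hw, Or.inl ?_⟩
  rw [map_sum, Fin.sum_univ_two, con1_tmul, con1_tmul, hf, zero_smul, zero_add, map_smul,
    Matrix.det_smul, det_toMat_tmul, mul_zero]

end TwoByTwoByTwo

/-- A nonsingular tensor in `F² ⊗ F² ⊗ F²` has tensor rank at least `3`;
equivalently every tensor of rank at most `2` is singular. -/
theorem stmt13 (F : Type*) [Field F]
    (v : (Fin 2 → F) ⊗[F] ((Fin 2 → F) ⊗[F] (Fin 2 → F)))
    (hv : TensorNonsingular F v) :
    3 ≤ tensorRank F v := by
  by_contra! hrank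
  obtain ⟨f, g, h, rfl⟩ := TensorProduct.exists_sum_tmul_tmul_eq_of_le
    (by omega : tensorRank F v ≤ 2) (exists_sum_tmul_tmul_eq_tensorRank v)
  exact hv.not_tensorSingular (tensorSingular_sum_two f g h)
end

section
/- Let q be a prime power and F = F_q. Any two nonsingular tensors in F_q² ⊗ F_q² ⊗ F_q² are equivalent under the action of GL(2,q) × GL(2,q) × GL(2,q) composed with a permutation of the three factors, up to a nonzero scalar. In particular, the stabiliser of the Segre variety S_{2,2,2}(F_q) in PGL(8,q) acts transitively on the nonsingular points of PG(7,q). -/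
/-- The action of `GL(2,F)³` on hypercubes. -/
def actGL {F : Type*} [Field F] (g₁ g₂ g₃ : Matrix (Fin 2) (Fin 2) F)
    (v : Fin 2 → Fin 2 → Fin 2 → F) : Fin 2 → Fin 2 → Fin 2 → F :=
  fun i j k => ∑ a, ∑ b, ∑ c, g₁ i a * g₂ j b * g₃ k c * v a b c

/-- The action of `S₃` on hypercubes by permuting the three factors. -/
def permute {F : Type*} (σ : Equiv.Perm (Fin 3))
    (v : Fin 2 → Fin 2 → Fin 2 → F) : Fin 2 → Fin 2 → Fin 2 → F :=
  fun i j k => v (![i, j, k] (σ 0)) (![i, j, k] (σ 1)) (![i, j, k] (σ 2))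

/-! Contracting along the first factor, a nonsingular tensor is a pencil `⟨A, B⟩` of `2 × 2`
matrices whose nonzero members are all invertible; acting on the second factor normalises it to
`⟨1, M⟩` with `M` free of eigenvalues in `F`, i.e. with irreducible characteristic polynomial.
Then `F[M]` is a field with `q²` elements, so it contains a root `c + d M` of the characteristic
polynomial of any other such `N`. A change of basis of the pencil replaces `M` by `c + d M`, and
two `2 × 2` matrices annihilated by the same irreducible quadratic are conjugate (both are
conjugate to its companion matrix), which the second and third factors realise. Neither a
permutation of the factors nor a scalar is needed. -/

open Matrix Polynomial

namespace Matrix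

theorem exists_aeval_aeval_charpoly_eq_zero {F n : Type*} [Field F] [Finite F] [Fintype n]
    [DecidableEq n] {M N : Matrix n n F} (hM : Irreducible M.charpoly)
    (hN : Irreducible N.charpoly) : ∃ f : F[X], aeval (aeval M f) N.charpoly = 0 := by
  have := Fact.mk hM
  have := Fact.mk hN
  have := M.charpoly_monic.finite_adjoinRoot
  have : Finite (AdjoinRoot M.charpoly) := Module.finite_of_finite F
  obtain ⟨φ⟩ : Nonempty (AdjoinRoot N.charpoly →ₐ[F] AdjoinRoot M.charpoly) :=
    FiniteField.nonempty_algHom_of_finrank_dvd <| by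
      rw [(AdjoinRoot.powerBasis' N.charpoly_monic).finrank,
        (AdjoinRoot.powerBasis' M.charpoly_monic).finrank]
      simp only [AdjoinRoot.powerBasis'_dim, charpoly_natDegree_eq_dim, dvd_refl]
  obtain ⟨f, hf⟩ := AdjoinRoot.mk_surjective (φ (AdjoinRoot.root N.charpoly))
  have hdvd : M.charpoly ∣ N.charpoly.comp f := by
    rw [← AdjoinRoot.mk_eq_zero, ← AdjoinRoot.aeval_eq, aeval_comp, AdjoinRoot.aeval_eq, hf]
    exact AdjoinRoot.aeval_algHom_eq_zero N.charpoly φ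
  obtain ⟨g, hg⟩ := hdvd
  exact ⟨f, by rw [← aeval_comp, hg, map_mul, aeval_self_charpoly, zero_mul]⟩

variable {R : Type*} [CommRing R]

theorem exists_aeval_eq_smul_one_add_smul [Nontrivial R] (A : Matrix (Fin 2) (Fin 2) R)
    (f : R[X]) : ∃ c d : R, aeval A f = c • 1 + d • A := by
  have hdeg : (f %ₘ A.charpoly).natDegree ≤ 1 := by
    have := natDegree_modByMonic_lt f A.charpoly_monic
      (fun h ↦ by simpa [h] using A.charpoly_natDegree_eq_dim)
    simp only [charpoly_natDegree_eq_dim, Fintype.card_fin] at this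
    omega
  refine ⟨(f %ₘ A.charpoly).coeff 0, (f %ₘ A.charpoly).coeff 1, ?_⟩
  rw [← aeval_modByMonic_eq_self_of_root (aeval_self_charpoly A),
    eq_X_add_C_of_natDegree_le_one hdeg]
  simp [Algebra.algebraMap_eq_smul_one, add_comm]

theorem aeval_fin_two_quadratic (B : Matrix (Fin 2) (Fin 2) R) (t δ : R) :
    aeval B (X ^ 2 - C t * X + C δ) = B ^ 2 - t • B + δ • 1 := by
  simp [Algebra.algebraMap_eq_smul_one]

theorem apply_one_zero_ne_zero_of_aeval_eq_zero {B : Matrix (Fin 2) (Fin 2) R} {t δ : R}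
    (hB : aeval B (X ^ 2 - C t * X + C δ) = 0)
    (hroot : ∀ x, ¬ (X ^ 2 - C t * X + C δ).IsRoot x) : B 1 0 ≠ 0 := by
  intro h10
  apply hroot (B 0 0)
  have h := congrFun₂ hB 0 0
  rw [aeval_fin_two_quadratic] at h
  simpa [pow_two, mul_apply, h10] using h

theorem isConj_companion_of_aeval_eq_zero {B : Matrix (Fin 2) (Fin 2) R} {t δ : R}
    (hB : aeval B (X ^ 2 - C t * X + C δ) = 0) (h10 : IsUnit (B 1 0)) :
    IsConj !![0, -δ; 1, t] B := by
  -- the columns `e₀, B e₀` form a cyclic basis for `B`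
  have hP : IsUnit !![1, B 0 0; 0, B 1 0] := by
    simpa [isUnit_iff_isUnit_det, det_fin_two_of] using h10
  rw [aeval_fin_two_quadratic] at hB
  have h00 := congrFun₂ hB 0 0
  have h10' := congrFun₂ hB 1 0
  simp only [pow_two, add_apply, sub_apply, mul_apply, Fin.sum_univ_two, smul_apply, smul_eq_mul,
    one_apply_eq, one_apply_ne one_ne_zero, mul_one, mul_zero, zero_apply, add_zero] at h00 h10'
  refine ⟨hP.unit, ?_⟩
  ext i j
  fin_cases i <;> fin_cases j <;>
    simp only [Fin.zero_eta, Fin.mk_one, Fin.isValue, IsUnit.unit_spec, mul_apply, of_apply,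
      cons_val', cons_val_fin_one, cons_val_zero, cons_val_one, Fin.sum_univ_two, mul_zero, mul_one,
      one_mul, zero_mul, mul_neg, neg_zero, zero_add, add_zero]
  · linear_combination -h00
  · linear_combination -h10'

theorem isConj_of_aeval_eq_zero {F : Type*} [Field F] {B N : Matrix (Fin 2) (Fin 2) F}
    {t δ : F} (hB : aeval B (X ^ 2 - C t * X + C δ) = 0)
    (hN : aeval N (X ^ 2 - C t * X + C δ) = 0)
    (hroot : ∀ x, ¬ (X ^ 2 - C t * X + C δ).IsRoot x) : IsConj B N :=
  (isConj_comm.mp <| isConj_companion_of_aeval_eq_zero hB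
    (apply_one_zero_ne_zero_of_aeval_eq_zero hB hroot).isUnit).trans <|
    isConj_companion_of_aeval_eq_zero hN (apply_one_zero_ne_zero_of_aeval_eq_zero hN hroot).isUnit

end Matrix

def ofSlices {F : Type*} (A B : Matrix (Fin 2) (Fin 2) F) : Fin 2 → Fin 2 → Fin 2 → F :=
  fun i ↦ ![A, B] i

theorem ofSlices_slice1 {F : Type*} (v : Fin 2 → Fin 2 → Fin 2 → F) :
    ofSlices (slice1 v 0) (slice1 v 1) = v := by
  funext i
  fin_cases i <;> rfl

theorem permute_one {F : Type*} (v : Fin 2 → Fin 2 → Fin 2 → F) : permute 1 v = v := rfl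

section TensorAction

variable {F : Type*} [Field F]

theorem actGL_ofSlices (R P Q A B : Matrix (Fin 2) (Fin 2) F) :
    actGL R P Q (ofSlices A B) =
      ofSlices (R 0 0 • (P * A * Qᵀ) + R 0 1 • (P * B * Qᵀ))
        (R 1 0 • (P * A * Qᵀ) + R 1 1 • (P * B * Qᵀ)) := by
  funext i j k
  fin_cases i <;>
    simp only [actGL, ofSlices, Fin.zero_eta, Fin.mk_one, Fin.isValue, Fin.sum_univ_two,
      cons_val_zero, cons_val_one, Matrix.add_apply, Matrix.smul_apply, mul_apply, transpose_apply,
      smul_eq_mul] <;>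
    ring

theorem actGL_actGL (g₁ g₂ g₃ h₁ h₂ h₃ : Matrix (Fin 2) (Fin 2) F)
    (v : Fin 2 → Fin 2 → Fin 2 → F) :
    actGL g₁ g₂ g₃ (actGL h₁ h₂ h₃ v) = actGL (g₁ * h₁) (g₂ * h₂) (g₃ * h₃) v := by
  funext i j k
  simp only [actGL, mul_apply, Fin.sum_univ_two]
  ring

theorem actGL_one (v : Fin 2 → Fin 2 → Fin 2 → F) : actGL 1 1 1 v = v := by
  funext i j k
  simp [actGL, one_apply]

def GLEquivalent (v w : Fin 2 → Fin 2 → Fin 2 → F) : Prop :=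
  ∃ g₁ g₂ g₃ : GL (Fin 2) F, actGL g₁ g₂ g₃ v = w

namespace GLEquivalent

variable {u v w : Fin 2 → Fin 2 → Fin 2 → F}

theorem symm (h : GLEquivalent u v) : GLEquivalent v u := by
  obtain ⟨g₁, g₂, g₃, rfl⟩ := h
  exact ⟨g₁⁻¹, g₂⁻¹, g₃⁻¹, by simp [actGL_actGL, actGL_one]⟩

theorem trans (h : GLEquivalent u v) (h' : GLEquivalent v w) : GLEquivalent u w := by
  obtain ⟨g₁, g₂, g₃, rfl⟩ := h
  obtain ⟨h₁, h₂, h₃, rfl⟩ := h'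
  exact ⟨h₁ * g₁, h₂ * g₂, h₃ * g₃, by simp [actGL_actGL]⟩

end GLEquivalent

theorem glEquivalent_ofSlices_smul_add {R : Matrix (Fin 2) (Fin 2) F} (hR : IsUnit R)
    (A B : Matrix (Fin 2) (Fin 2) F) :
    GLEquivalent (ofSlices A B) (ofSlices (R 0 0 • A + R 0 1 • B) (R 1 0 • A + R 1 1 • B)) :=
  ⟨hR.unit, 1, 1, by simp [actGL_ofSlices]⟩

theorem glEquivalent_ofSlices_mul_mul (P Q : GL (Fin 2) F) (A B : Matrix (Fin 2) (Fin 2) F) :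
    GLEquivalent (ofSlices A B) (ofSlices (P * A * Q) (P * B * Q)) := by
  refine ⟨1, P, ((isUnit_transpose (Q : Matrix (Fin 2) (Fin 2) F)).2 Q.isUnit).unit, ?_⟩
  simp [actGL_ofSlices]

theorem glEquivalent_ofSlices_one_of_isConj {B N : Matrix (Fin 2) (Fin 2) F} (h : IsConj B N) :
    GLEquivalent (ofSlices 1 B) (ofSlices 1 N) := by
  obtain ⟨g, hg⟩ := h
  convert glEquivalent_ofSlices_mul_mul g g⁻¹ 1 B using 2
  · simp
  · rw [hg.eq, Units.mul_inv_cancel_right]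

theorem glEquivalent_ofSlices_one_smul_add (M : Matrix (Fin 2) (Fin 2) F) (c : F) {d : F}
    (hd : d ≠ 0) : GLEquivalent (ofSlices 1 M) (ofSlices 1 (c • 1 + d • M)) := by
  have hR : IsUnit !![1, 0; c, d] := by
    simpa [isUnit_iff_isUnit_det, det_fin_two_of] using hd
  simpa using glEquivalent_ofSlices_smul_add hR 1 M

theorem HNonsingular.exists_glEquivalent_ofSlices_one
    {v : Fin 2 → Fin 2 → Fin 2 → F} (hv : HNonsingular v) :
    ∃ M : Matrix (Fin 2) (Fin 2) F,
      (∀ x, ¬ M.charpoly.IsRoot x) ∧ GLEquivalent v (ofSlices 1 M) := by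
  have hA : IsUnit (slice1 v 0) := by
    simpa [Fin.sum_univ_two] using (hv ![1, 0] fun h ↦ by simpa using congrFun h 0).1
  have hdet := (isUnit_iff_isUnit_det _).mp hA
  set M := (slice1 v 0)⁻¹ * slice1 v 1
  have hAM : slice1 v 0 * M = slice1 v 1 := by rw [← mul_assoc, mul_nonsing_inv _ hdet, one_mul]
  refine ⟨M, fun x hx ↦ ?_, ?_⟩
  · have hpencil : slice1 v 0 * (scalar (Fin 2) x - M) = ∑ i, ![x, -1] i • slice1 v i := by
      rw [mul_sub, hAM, scalar_apply, ← smul_one_eq_diagonal, Matrix.mul_smul, mul_one,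
        Fin.sum_univ_two]
      simp [sub_eq_add_neg]
    have hunit := (hv ![x, -1] fun h ↦ by simpa using congrFun h 1).1
    rw [← hpencil] at hunit
    rw [IsRoot, eval_charpoly] at hx
    exact ((isUnit_iff_isUnit_det _).mp (isUnit_of_mul_isUnit_right hunit)).ne_zero hx
  · simpa [ofSlices_slice1, nonsing_inv_mul _ hdet] using
      glEquivalent_ofSlices_mul_mul hA.unit⁻¹ 1 (slice1 v 0) (slice1 v 1)

theorem HNonsingular.glEquivalent [Finite F]
    {v w : Fin 2 → Fin 2 → Fin 2 → F} (hv : HNonsingular v) (hw : HNonsingular w) :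
    GLEquivalent v w := by
  obtain ⟨M, hM, hvM⟩ := hv.exists_glEquivalent_ofSlices_one
  obtain ⟨N, hN, hwN⟩ := hw.exists_glEquivalent_ofSlices_one
  have hirr (A : Matrix (Fin 2) (Fin 2) F) (hA : ∀ x, ¬ A.charpoly.IsRoot x) :
      Irreducible A.charpoly :=
    irreducible_of_degree_le_three_of_not_isRoot (by simp) hA
  obtain ⟨f, hf⟩ := exists_aeval_aeval_charpoly_eq_zero (hirr M hM) (hirr N hN)
  obtain ⟨c, d, hcd⟩ := exists_aeval_eq_smul_one_add_smul M f
  have hN' := aeval_self_charpoly N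
  rw [hcd, charpoly_fin_two] at hf
  rw [charpoly_fin_two] at hN hN'
  have hd : d ≠ 0 := by
    rintro rfl
    simpa using apply_one_zero_ne_zero_of_aeval_eq_zero hf hN
  exact hvM.trans <| (glEquivalent_ofSlices_one_smul_add M c hd).trans <|
    (glEquivalent_ofSlices_one_of_isConj (isConj_of_aeval_eq_zero hf hN' hN)).trans hwN.symm

end TensorAction

/-- Over a finite field `F_q`, any two nonsingular tensors in
`F_q² ⊗ F_q² ⊗ F_q²` are equivalent under `GL(2,q)³` composed with a
permutation of the factors, up to a nonzero scalar: the stabiliser of the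
Segre variety acts transitively on nonsingular points of `PG(7,q)`. -/
theorem stmt15 (F : Type*) [Field F] [Fintype F]
    (v v' : Fin 2 → Fin 2 → Fin 2 → F)
    (hv : HNonsingular v) (hv' : HNonsingular v') :
    ∃ (σ : Equiv.Perm (Fin 3)) (g₁ g₂ g₃ : GL (Fin 2) F) (c : Fˣ),
      actGL (g₁ : Matrix (Fin 2) (Fin 2) F) (g₂ : Matrix (Fin 2) (Fin 2) F)
        (g₃ : Matrix (Fin 2) (Fin 2) F) (permute σ v) = (c : F) • v' := by
  obtain ⟨g₁, g₂, g₃, h⟩ := hv.glEquivalent hv'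
  exact ⟨1, g₁, g₂, g₃, 1, by simpa [permute_one] using h⟩
end

section
/- Let F be a field and let y = y₁⊗y₂⊗y₃, z = z₁⊗z₂⊗z₃ be pure tensors with y₁ = z₁ and y₂, z₂ linearly independent and y₃, z₃ linearly independent (a secant line of type (1,2,2)). Then for any a, b ∈ F not both zero, the tensor ay + bz is singular; in particular, every point of such a secant line is a singular point. -/
open TensorProduct

variable (F : Type*) [Field F]

/-- Every point of a secant line of type `(1,2,2)` is singular. -/
theorem stmt17 (F : Type*) [Field F] (y₁ y₂ y₃ z₂ z₃ : Fin 2 → F)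
    (hy₁ : y₁ ≠ 0)
    (h2 : LinearIndependent F ![y₂, z₂])
    (h3 : LinearIndependent F ![y₃, z₃])
    (a b : F) (hab : ¬(a = 0 ∧ b = 0)) :
    TensorSingular F
      (a • (y₁ ⊗ₜ[F] (y₂ ⊗ₜ[F] y₃)) + b • (y₁ ⊗ₜ[F] (z₂ ⊗ₜ[F] z₃))) := by
  set w : (Fin 2 → F) →ₗ[F] F :=
    (y₁ 1) • LinearMap.proj 0 - (y₁ 0) • LinearMap.proj 1 with hw
  have hwy₁ : w y₁ = 0 := by
    simp [hw, mul_comm]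
  have hw0 : w ≠ 0 := by
    intro h
    apply hy₁
    have h0 : w (fun j => if j = 0 then 1 else 0) = 0 := by rw [h]; rfl
    have h1 : w (fun j => if j = 1 then 1 else 0) = 0 := by rw [h]; rfl
    simp [hw] at h0 h1
    funext i
    fin_cases i <;> simp [h0, h1]
  refine ⟨w, hw0, Or.inl ?_⟩
  have : con1 F w (a • (y₁ ⊗ₜ[F] (y₂ ⊗ₜ[F] y₃)) + b • (y₁ ⊗ₜ[F] (z₂ ⊗ₜ[F] z₃))) = 0 := by
    have h0 : (TensorProduct.map w (LinearMap.id (R := F)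
        (M := (Fin 2 → F) ⊗[F] (Fin 2 → F))))
        (a • (y₁ ⊗ₜ[F] (y₂ ⊗ₜ[F] y₃)) + b • (y₁ ⊗ₜ[F] (z₂ ⊗ₜ[F] z₃))) = 0 := by
      simp only [map_add, map_smul, TensorProduct.map_tmul, hwy₁, LinearMap.id_coe, id_eq,
        TensorProduct.zero_tmul, smul_zero, add_zero]
    rw [con1, LinearMap.comp_apply, h0, LinearMap.map_zero]
  rw [this]
  simp
end
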